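/- For every mashup M of connected simple graphs Γ₁, …, Γₙ, and every choice of basepoint x₀ ∈ V(M), there is a surjective graph homomorphism ψ from the free product ⋆ᵢ Γᵢ (initialised at 𝐮(∅) = (φ⁻¹_{(x₀,1)}(x₀), …, φ⁻¹_{(x₀,n)}(x₀))) onto M with ψ(∅) = x₀ which intertwines the update functions: 𝐮_M(ψ(ṽ)) = 𝐮(ṽ) for all vertices ṽ. -/

import Mathlib

variable {ι : Type} [DecidableEq ι]

abbrev Letter (V : ι → Type) := Σ i, V i

def upd {V : ι → Type} (u : ∀ i, V i) : List (Letter V) → ∀ i, V i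
  | [] => u
  | ⟨j, x⟩ :: w => Function.update (upd u w) j x

def Adm {V : ι → Type} (u : ∀ i, V i) (w : List (Letter V)) : Prop :=
  w.Chain' (fun a b => a.1 ≠ b.1) ∧
    ∀ (a : Letter V) (p : List (Letter V)), a :: p <:+ w → a.2 ≠ upd u p a.1

def Word {V : ι → Type} (u : ∀ i, V i) := {w : List (Letter V) // Adm u w}

def emptyWord {V : ι → Type} (u : ∀ i, V i) : Word u :=
  ⟨[], List.isChain_nil, by intro a p h; simp at h⟩

def Pre {V : ι → Type} (G : ∀ i, SimpleGraph (V i)) (u : ∀ i, V i)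
    (v w : List (Letter V)) : Prop :=
  (∃ (p : List (Letter V)) (j : ι) (a b : V j),
      (G j).Adj a b ∧ v = ⟨j, a⟩ :: p ∧ w = ⟨j, b⟩ :: p) ∨
  (∃ (j : ι) (a : V j), (G j).Adj (upd u v j) a ∧ w = ⟨j, a⟩ :: v)

def freeProd {V : ι → Type} (G : ∀ i, SimpleGraph (V i)) (u : ∀ i, V i) :
    SimpleGraph (Word u) :=
  SimpleGraph.fromRel fun v w => Pre G u v.1 w.1

/-- A mashup of the graphs `Γ₁, …, Γₙ`: a connected graph `M` together with
sheet embeddings `φ_{(x,i)} : Γᵢ ↪ M` and the induced update function, such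
that every vertex lies in its sheets, every edge lies in a sheet, sheets
coincide, are disjoint or meet in a single vertex, the `i`-sheet through a
vertex is unique, and the `j`-th update is constant along `i`-sheets. -/
structure Mashup {n : ℕ} (V : Fin n → Type) (G : ∀ i, SimpleGraph (V i)) where
  M : Type
  graph : SimpleGraph M
  conn : graph.Connected
  emb : M → ∀ i : Fin n, G i ↪g graph
  updM : M → ∀ i, V i
  emb_upd : ∀ (x : M) (i : Fin n), emb x i (updM x i) = x
  edge_cover : ∀ a b : M, graph.Adj a b →
    ∃ (x : M) (i : Fin n) (va vb : V i), emb x i va = a ∧ emb x i vb = b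
  sheets : ∀ (x y : M) (i j : Fin n),
    (i = j ∧ Set.range (emb x i) = Set.range (emb y j)) ∨
    (Set.range (emb x i) ∩ Set.range (emb y j) = ∅) ∨
    (i ≠ j ∧ ∃ z : M, Set.range (emb x i) ∩ Set.range (emb y j) = {z})
  sheet_unique : ∀ (x y : M) (i : Fin n),
    y ∈ Set.range (emb x i) → emb y i = emb x i
  upd_const : ∀ (x : M) (i j : Fin n), i ≠ j → ∀ v : V i,
    updM (emb x i v) j = updM x j

/-!
The homomorphism reads a word from its innermost letter outwards: starting at `x₀`, a letter
`⟨j, a⟩` moves from the current vertex `y` to `φ_{(y,j)}(a)`. Since `φ_{(y,j)}(a)` has update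
`(𝐮_M y)[j ↦ a]`, this intertwines the update functions, and free-product edges, which change
or append a letter, go to edges inside one sheet. For surjectivity, every neighbour `z` of the
image of an admissible word `w` lies in the `i`-sheet of that image for some `i`; after dropping
a leading `i`-letter of `w`, `z` is either the image of the shortened word or of that word with
a new `i`-letter in front. Connectedness of `M` does the rest.
-/

section Admissible

variable {V : ι → Type} {u : ∀ i, V i}

theorem Adm.tail {a : Letter V} {w : List (Letter V)} (h : Adm u (a :: w)) : Adm u w :=
  ⟨h.1.tail, fun b q hq => h.2 b q (hq.trans (List.suffix_cons a w))⟩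

theorem Adm.cons {i : ι} {b : V i} {w : List (Letter V)} (hw : Adm u w)
    (hhead : ∀ c ∈ w.head?, c.1 ≠ i) (hb : b ≠ upd u w i) : Adm u (⟨i, b⟩ :: w) := by
  refine ⟨List.isChain_cons.mpr ⟨fun c hc => (hhead c hc).symm, hw.1⟩, fun a p hp => ?_⟩
  rcases List.suffix_cons_iff.mp hp with h | h
  · obtain ⟨rfl, rfl⟩ := List.cons_eq_cons.mp h
    exact hb
  · exact hw.2 a p h

end Admissible

namespace Mashup

variable {n : ℕ} {V : Fin n → Type} {G : ∀ i, SimpleGraph (V i)} (Mp : Mashup V G)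

def evalWord (x₀ : Mp.M) : List (Letter V) → Mp.M
  | [] => x₀
  | ⟨j, a⟩ :: w => Mp.emb (evalWord x₀ w) j a

@[simp]
theorem evalWord_cons (x₀ : Mp.M) (j : Fin n) (a : V j) (w : List (Letter V)) :
    Mp.evalWord x₀ (⟨j, a⟩ :: w) = Mp.emb (Mp.evalWord x₀ w) j a :=
  rfl

theorem emb_emb (y : Mp.M) (j : Fin n) (a : V j) : Mp.emb (Mp.emb y j a) j = Mp.emb y j :=
  Mp.sheet_unique y _ j ⟨a, rfl⟩

theorem updM_emb (y : Mp.M) (j : Fin n) (a : V j) :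
    Mp.updM (Mp.emb y j a) = Function.update (Mp.updM y) j a := by
  funext i
  by_cases h : i = j
  · subst h
    have hself := Mp.emb_upd (Mp.emb y i a) i
    rw [emb_emb] at hself
    simpa using (Mp.emb y i).injective hself
  · rw [Function.update_of_ne h]
    exact Mp.upd_const y j i (Ne.symm h) a

theorem updM_evalWord (x₀ : Mp.M) (w : List (Letter V)) :
    Mp.updM (Mp.evalWord x₀ w) = upd (Mp.updM x₀) w := by
  induction w with
  | nil => rfl
  | cons a w ih =>
    obtain ⟨j, a⟩ := a
    rw [evalWord, updM_emb, ih]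
    rfl

theorem adj_evalWord_of_pre (x₀ : Mp.M) {v w : List (Letter V)}
    (h : Pre G (Mp.updM x₀) v w) : Mp.graph.Adj (Mp.evalWord x₀ v) (Mp.evalWord x₀ w) := by
  rcases h with ⟨p, j, a, b, hab, rfl, rfl⟩ | ⟨j, a, hab, rfl⟩
  · exact (Mp.emb (Mp.evalWord x₀ p) j).map_rel_iff.mpr hab
  · rw [← updM_evalWord] at hab
    simpa only [evalWord, emb_upd] using (Mp.emb (Mp.evalWord x₀ v) j).map_rel_iff.mpr hab

def evalWordHom (x₀ : Mp.M) : freeProd G (Mp.updM x₀) →g Mp.graph where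
  toFun v := Mp.evalWord x₀ v.1
  map_rel' := by
    rintro v w ⟨-, h | h⟩
    · exact Mp.adj_evalWord_of_pre x₀ h
    · exact (Mp.adj_evalWord_of_pre x₀ h).symm

/-- Dropping a leading `i`-letter does not change the `i`-sheet of the image. -/
theorem exists_adm_head_ne_emb_eq (x₀ : Mp.M) {u : ∀ i, V i} {w : List (Letter V)}
    (hw : Adm u w) (i : Fin n) :
    ∃ q, Adm u q ∧ (∀ c ∈ q.head?, c.1 ≠ i) ∧
      Mp.emb (Mp.evalWord x₀ q) i = Mp.emb (Mp.evalWord x₀ w) i := by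
  match w, hw with
  | [], hw => exact ⟨[], hw, by simp, rfl⟩
  | ⟨j, a⟩ :: p, hw =>
    by_cases hji : j = i
    · subst hji
      refine ⟨p, hw.tail, ?_, by rw [evalWord_cons, emb_emb]⟩
      intro c hc
      cases p with
      | nil => simp at hc
      | cons c' p =>
        obtain rfl := Option.some.inj hc
        exact (List.isChain_cons_cons.mp hw.1).1.symm
    · refine ⟨_, hw, ?_, rfl⟩
      intro c hc
      obtain rfl := Option.some.inj hc
      exact hji

theorem exists_adm_evalWord_eq_of_adj (x₀ : Mp.M) {w : List (Letter V)}
    (hw : Adm (Mp.updM x₀) w) {z : Mp.M} (hz : Mp.graph.Adj (Mp.evalWord x₀ w) z) :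
    ∃ w', Adm (Mp.updM x₀) w' ∧ Mp.evalWord x₀ w' = z := by
  obtain ⟨x, i, a, b, ha, rfl⟩ := Mp.edge_cover _ _ hz
  have hsheet : Mp.emb (Mp.evalWord x₀ w) i = Mp.emb x i := Mp.sheet_unique x _ i ⟨a, ha⟩
  obtain ⟨q, hq, hhead, hqw⟩ := Mp.exists_adm_head_ne_emb_eq x₀ hw i
  rw [← hsheet, ← hqw]
  by_cases hb : b = upd (Mp.updM x₀) q i
  · refine ⟨q, hq, ?_⟩
    rw [hb, ← updM_evalWord, emb_upd]
  · exact ⟨⟨i, b⟩ :: q, hq.cons hhead hb, evalWord_cons ..⟩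

theorem evalWordHom_surjective (x₀ : Mp.M) : Function.Surjective (Mp.evalWordHom x₀) := by
  intro y
  suffices ∃ w, Adm (Mp.updM x₀) w ∧ Mp.evalWord x₀ w = y from
    let ⟨w, hw, hwy⟩ := this; ⟨⟨w, hw⟩, hwy⟩
  induction (SimpleGraph.reachable_iff_reflTransGen _ _).mp (Mp.conn.preconnected x₀ y) with
  | refl => exact ⟨[], (emptyWord _).2, rfl⟩
  | tail _ hadj ih =>
    obtain ⟨w, hw, rfl⟩ := ih
    exact Mp.exists_adm_evalWord_eq_of_adj x₀ hw hadj

end Mashup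

theorem stmt12_general {n : ℕ} {V : Fin n → Type} {G : ∀ i, SimpleGraph (V i)}
    (Mp : Mashup V G) (x₀ : Mp.M) :
    ∃ ψ : freeProd G (Mp.updM x₀) →g Mp.graph,
      Function.Surjective ψ ∧ ψ (emptyWord (Mp.updM x₀)) = x₀ ∧
      ∀ v : Word (Mp.updM x₀), Mp.updM (ψ v) = upd (Mp.updM x₀) v.1 :=
  ⟨Mp.evalWordHom x₀, Mp.evalWordHom_surjective x₀, rfl, fun v => Mp.updM_evalWord x₀ v.1⟩

/-- Every mashup `M` of connected graphs with basepoint `x₀` is a quotient of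
the free product initialised at the update of `x₀`: there is a surjective
graph homomorphism `ψ` onto `M` sending the empty word to `x₀` and
intertwining the update functions. -/
theorem stmt12 {n : ℕ} {V : Fin n → Type} {G : ∀ i, SimpleGraph (V i)}
    (hconn : ∀ i, (G i).Connected) (Mp : Mashup V G) (x₀ : Mp.M) :
    ∃ ψ : freeProd G (Mp.updM x₀) →g Mp.graph,
      Function.Surjective ψ ∧ ψ (emptyWord (Mp.updM x₀)) = x₀ ∧
      ∀ v : Word (Mp.updM x₀), Mp.updM (ψ v) = upd (Mp.updM x₀) v.1 :=
  stmt12_general Mp x₀
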